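/- Let K be a number field, 𝔭 a nonzero prime ideal of its ring of integers, and ν the normalized discrete valuation on K associated to 𝔭. Let E be an elliptic curve over K and let P, Q ∈ E(K) be points such that a·P + b·Q ≠ O for every (a, b) ∈ ℤ² with (a, b) ≠ (0, 0); write v·𝐏 = v₁·P + v₂·Q for v = (v₁, v₂) ∈ ℤ², and write x(R) for the x-coordinate of a point R ≠ O. Let λ : E(K) \ {O} → ℝ be a function satisfying the quasi-parallelogram law: for all R, S ∈ E(K) with R, S, R+S, R−S all different from O, λ(R+S) + λ(R−S) = 2·λ(R) + 2·λ(S) + ν(x(R) − x(S)). Let W : ℤ² → K be an elliptic net such that W(1,0) = W(0,1) = W(1,1) = 1, W(v) ≠ 0 for every v ≠ (0,0), and such that for all u, v ∈ ℤ² with u, v, u+v, u−v all different from (0,0), W(v)²·W(u)²·(x(v·𝐏) − x(u·𝐏)) = −W(v+u)·W(v−u). Then for every (a, b) ∈ ℤ² with (a, b) ≠ (0, 0): λ(a·P + b·Q) = a²·λ(P) + b²·λ(Q) + a·b·(λ(P+Q) − λ(P) − λ(Q)) + ν(W(a, b)). -/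

import Mathlib

/-!
Write `v • 𝐏 = v₁ • P + v₂ • Q`. The compatibility of `W` with `x`-coordinates says that
`ν (x (u • 𝐏) - x (v • 𝐏))` is the second difference
`ν W(u+v) + ν W(u-v) - 2 ν W(u) - 2 ν W(v)` of `ν ∘ W`, so it cancels the error term of the
quasi-parallelogram law: the defect `λ (v • 𝐏) - ν (W v) - q(v)`, with `q` the quadratic form of
the claim, satisfies the exact parallelogram law whenever `u, v, u ± v ≠ 0`, and it vanishes at
`(1,0)`, `(0,1)`, `(1,1)`. On a line `p + ℤ d` that misses the origin and whose direction `d` is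
a zero of the defect, the law makes the defect an arithmetic progression; lines of this kind
through the known zeros cover `ℤ² \ {0}`.
-/

/-- An *elliptic net* is a map `W : A → K` from an abelian group `A` to a field `K`
such that `W 0 = 0` and, for all `p q r s : A`,
`W (p+q+s) * W (p-q) * W (r+s) * W r + W (q+r+s) * W (q-r) * W (p+s) * W p
  + W (r+p+s) * W (r-p) * W (q+s) * W q = 0`. -/
def IsEllipticNet' {A K : Type*} [AddCommGroup A] [CommRing K] (W : A → K) : Prop :=
  W 0 = 0 ∧ ∀ p q r s : A,
    W (p + q + s) * W (p - q) * W (r + s) * W r +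
      W (q + r + s) * W (q - r) * W (p + s) * W p +
      W (r + p + s) * W (r - p) * W (q + s) * W q = 0

/-- The `x`-coordinate of a rational point on a Weierstrass curve in affine coordinates,
with the junk value `0` at the point at infinity. -/
noncomputable def WeierstrassCurve.Affine.Point.xCoord {K : Type*} [Field K]
    {E : WeierstrassCurve.Affine K} : E.Point → K
  | .zero => 0
  | .some (x := x) _ _ => x

section SecondDifference

variable {G : Type*} [AddCommGroup G] {g : ℤ → G}

theorem eq_add_zsmul_of_add_add_sub_eq_two_nsmul (h : ∀ x, g (x + 1) + g (x - 1) = 2 • g x)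
    (x : ℤ) : g x = g 0 + x • (g 1 - g 0) := by
  have hstep : ∀ x, g (x + 1) - g x = g 1 - g 0 := by
    intro x
    induction x using Int.induction_on with
    | zero => simp
    | succ n ih =>
      rw [← ih, sub_eq_sub_iff_add_eq_add, ← two_nsmul, ← h (n + 1), add_sub_cancel_right]
    | pred n ih =>
      rw [← ih, sub_eq_sub_iff_add_eq_add, sub_add_cancel, ← two_nsmul, ← h (-n)]
  induction x using Int.induction_on with
  | zero => simp
  | succ n ih =>
    calc g (n + 1) = g n + (g (n + 1) - g n) := (add_sub_cancel _ _).symm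
      _ = _ := by rw [hstep, ih, add_zsmul, one_zsmul]; abel
  | pred n ih =>
    calc g (-n - 1) = g (-n) - (g (-n - 1 + 1) - g (-n - 1)) := by
          rw [sub_add_cancel, sub_sub_cancel]
      _ = _ := by rw [hstep, ih, sub_zsmul, one_zsmul]; abel

theorem eq_zero_of_add_add_sub_eq_two_nsmul [IsAddTorsionFree G]
    (h : ∀ x, g (x + 1) + g (x - 1) = 2 • g x) {m n : ℤ} (hmn : m ≠ n) (hm : g m = 0)
    (hn : g n = 0) (x : ℤ) : g x = 0 := by
  have hg := eq_add_zsmul_of_add_add_sub_eq_two_nsmul h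
  have hslope : g 1 - g 0 = 0 := by
    refine (IsAddTorsionFree.zsmul_eq_zero_iff_right (sub_ne_zero.2 hmn)).1 ?_
    calc (m - n) • (g 1 - g 0) = (g 0 + m • (g 1 - g 0)) - (g 0 + n • (g 1 - g 0)) := by
          rw [sub_zsmul]; abel
      _ = 0 := by rw [← hg, ← hg, hm, hn, sub_zero]
  rw [hg x, hslope, smul_zero, add_zero]
  simpa [hslope] using (hg m).symm.trans hm

end SecondDifference

def ParallelogramLawAwayFromZero {A G : Type*} [AddCommGroup A] [AddCommGroup G] (f : A → G) :
    Prop :=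
  ∀ u v : A, u ≠ 0 → v ≠ 0 → u + v ≠ 0 → u - v ≠ 0 → f (u + v) + f (u - v) = 2 • f u + 2 • f v

namespace ParallelogramLawAwayFromZero

variable {A G : Type*} [AddCommGroup A] [AddCommGroup G] {f g : A → G}

theorem sub (hf : ParallelogramLawAwayFromZero f) (hg : ParallelogramLawAwayFromZero g) :
    ParallelogramLawAwayFromZero (f - g) := by
  intro u v hu hv huv hsub
  simp only [Pi.sub_apply, smul_sub]
  calc f (u + v) - g (u + v) + (f (u - v) - g (u - v))
      = (f (u + v) + f (u - v)) - (g (u + v) + g (u - v)) := by abel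
    _ = _ := by rw [hf u v hu hv huv hsub, hg u v hu hv huv hsub]; abel

theorem eq_zero_on_line [IsAddTorsionFree G] (hf : ParallelogramLawAwayFromZero f) {p d : A}
    (hd₀ : d ≠ 0) (hd : f d = 0) (hline : ∀ t : ℤ, p + t • d ≠ 0) {m n : ℤ} (hmn : m ≠ n)
    (hm : f (p + m • d) = 0) (hn : f (p + n • d) = 0) (t : ℤ) : f (p + t • d) = 0 := by
  refine eq_zero_of_add_add_sub_eq_two_nsmul (g := fun t : ℤ => f (p + t • d)) (fun x => ?_)
    hmn hm hn t
  have hsucc : p + (x + 1) • d = p + x • d + d := by rw [add_zsmul, one_zsmul]; abel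
  have hpred : p + (x - 1) • d = p + x • d - d := by rw [sub_zsmul, one_zsmul]; abel
  have := hf (p + x • d) d (hline x) hd₀ (hsucc ▸ hline (x + 1)) (hpred ▸ hline (x - 1))
  simpa only [hsucc, hpred, hd, smul_zero, add_zero] using this

theorem eq_zero_of_prod_int [IsAddTorsionFree G] {f : ℤ × ℤ → G}
    (hf : ParallelogramLawAwayFromZero f) (h₁₀ : f (1, 0) = 0) (h₀₁ : f (0, 1) = 0)
    (h₁₁ : f (1, 1) = 0) {v : ℤ × ℤ} (hv : v ≠ 0) : f v = 0 := by
  have on_line : ∀ p d : ℤ × ℤ, d ≠ 0 → f d = 0 → (∀ t : ℤ, p + t • d ≠ 0) → ∀ m n : ℤ, m ≠ n →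
      f (p + m • d) = 0 → f (p + n • d) = 0 → ∀ t : ℤ, f (p + t • d) = 0 :=
    fun p d hd₀ hd hline m n hmn hm hn => hf.eq_zero_on_line hd₀ hd hline hmn hm hn
  have col₁ (b : ℤ) : f (1, b) = 0 := by
    simpa using on_line (1, 0) (0, 1) (by simp) h₀₁ (by simp) 0 1 (by simp) (by simpa) (by simpa) b
  have row₁ (a : ℤ) : f (a, 1) = 0 := by
    simpa using on_line (0, 1) (1, 0) (by simp) h₁₀ (by simp) 0 1 (by simp) (by simpa) (by simpa) a
  -- `(t, t + c)` with `c ≠ 0` misses the origin and meets the zeros `(1, 1 + c)`, `(1 - c, 1)`.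
  have off_diag (a b : ℤ) (hab : a ≠ b) : f (a, b) = 0 := by
    have := on_line (0, b - a) (1, 1) (by simp) h₁₁ (fun t => by simp [Prod.ext_iff]; omega)
      1 (1 - (b - a)) (by omega) (by simpa [add_comm] using col₁ (b - a + 1))
      (by simpa using row₁ (1 - (b - a))) a
    simpa using this
  obtain ⟨a, b⟩ := v
  rcases ne_or_eq a b with hab | rfl
  · exact off_diag a b hab
  · have hb : a ≠ 0 := by simpa [Prod.ext_iff] using hv
    simpa using on_line (0, a) (1, 0) (by simp) h₁₀ (by simp [Prod.ext_iff, hb]) (a + 1) (a + 2)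
      (by omega) (by simpa using off_diag (a + 1) a (by omega))
      (by simpa using off_diag (a + 2) a (by omega)) a

theorem of_quadraticForm {R : Type*} [CommRing R] (α β γ : R) :
    ParallelogramLawAwayFromZero
      (fun v : ℤ × ℤ => (v.1 : R) ^ 2 * α + (v.2 : R) ^ 2 * β + v.1 * v.2 * γ) := by
  intro u v _ _ _ _
  simp only [Prod.fst_add, Prod.snd_add, Prod.fst_sub, Prod.snd_sub, Int.cast_add, Int.cast_sub,
    nsmul_eq_mul, Nat.cast_ofNat]
  ring

theorem of_quasiParallelogramLaw {M : Type*} [AddCommGroup M] {φ : A →+ M}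
    (hφ : ∀ v, v ≠ 0 → φ v ≠ 0) {lam : M → G} {c : M → M → G}
    (hlam : ∀ R S : M, R ≠ 0 → S ≠ 0 → R + S ≠ 0 → R - S ≠ 0 →
      lam (R + S) + lam (R - S) = 2 • lam R + 2 • lam S + c R S)
    {w : A → G}
    (hw : ∀ u v : A, u ≠ 0 → v ≠ 0 → u + v ≠ 0 → u - v ≠ 0 →
      c (φ u) (φ v) = w (u + v) + w (u - v) - 2 • w u - 2 • w v) :
    ParallelogramLawAwayFromZero (fun v => lam (φ v) - w v) := by
  intro u v hu hv huv hsub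
  have h := hlam (φ u) (φ v) (hφ u hu) (hφ v hv) (by simpa using hφ _ huv)
    (by simpa using hφ _ hsub)
  rw [← map_add, ← map_sub, hw u v hu hv huv hsub] at h
  calc lam (φ (u + v)) - w (u + v) + (lam (φ (u - v)) - w (u - v))
      = (lam (φ (u + v)) + lam (φ (u - v))) - (w (u + v) + w (u - v)) := by abel
    _ = _ := by rw [h, smul_sub, smul_sub]; abel

end ParallelogramLawAwayFromZero

theorem IsFractionRing.exists_ne_zero_div_eq {R K : Type*} [CommRing R] [Nontrivial R] [Field K]
    [Algebra R K] [IsFractionRing R K] {x : K} (hx : x ≠ 0) :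
    ∃ a b : R, a ≠ 0 ∧ b ≠ 0 ∧ algebraMap R K a / algebraMap R K b = x := by
  obtain ⟨a, b, hb, rfl⟩ := IsFractionRing.div_surjective (A := R) x
  exact ⟨a, b, by rintro rfl; simp at hx, nonZeroDivisors.ne_zero hb, rfl⟩

section NormalizedValuation

open UniqueFactorizationMonoid

variable {R K : Type*} [CommRing R] [IsDedekindDomain R] [Field K] [Algebra R K]
  [DecidableEq (Ideal R)]

def IsNormalizedValuation (𝔭 : Ideal R) (ν : K → ℤ) : Prop :=
  ∀ a b : R, a ≠ 0 → b ≠ 0 → ν (algebraMap R K a / algebraMap R K b) =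
    (Multiset.count 𝔭 (normalizedFactors (Ideal.span {a})) : ℤ) -
      (Multiset.count 𝔭 (normalizedFactors (Ideal.span {b})) : ℤ)

theorem count_normalizedFactors_span_mul (𝔭 : Ideal R) {a b : R} (ha : a ≠ 0) (hb : b ≠ 0) :
    Multiset.count 𝔭 (normalizedFactors (Ideal.span {a * b})) =
      Multiset.count 𝔭 (normalizedFactors (Ideal.span {a})) +
        Multiset.count 𝔭 (normalizedFactors (Ideal.span {b})) := by
  rw [← Ideal.span_singleton_mul_span_singleton,
    normalizedFactors_mul (by simpa using ha) (by simpa using hb), Multiset.count_add]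

namespace IsNormalizedValuation

variable {𝔭 : Ideal R} {ν : K → ℤ}

theorem map_one (hν : IsNormalizedValuation 𝔭 ν) : ν 1 = 0 := by
  simpa using hν 1 1 one_ne_zero one_ne_zero

variable [IsFractionRing R K]

theorem map_mul (hν : IsNormalizedValuation 𝔭 ν) {x y : K} (hx : x ≠ 0) (hy : y ≠ 0) :
    ν (x * y) = ν x + ν y := by
  obtain ⟨a, b, ha, hb, rfl⟩ := IsFractionRing.exists_ne_zero_div_eq (R := R) hx
  obtain ⟨c, d, hc, hd, rfl⟩ := IsFractionRing.exists_ne_zero_div_eq (R := R) hy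
  rw [div_mul_div_comm, ← _root_.map_mul, ← _root_.map_mul,
    hν _ _ (mul_ne_zero ha hc) (mul_ne_zero hb hd), hν a b ha hb, hν c d hc hd,
    count_normalizedFactors_span_mul 𝔭 ha hc, count_normalizedFactors_span_mul 𝔭 hb hd]
  push_cast
  ring

theorem map_neg (hν : IsNormalizedValuation 𝔭 ν) (x : K) : ν (-x) = ν x := by
  rcases eq_or_ne x 0 with rfl | hx
  · rw [neg_zero]
  obtain ⟨a, b, ha, hb, rfl⟩ := IsFractionRing.exists_ne_zero_div_eq (R := R) hx
  rw [← neg_div, ← _root_.map_neg, hν _ _ (neg_ne_zero.2 ha) hb, hν a b ha hb,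
    Ideal.span_singleton_neg]

theorem eq_of_sq_mul_sq_mul_eq_neg_mul (hν : IsNormalizedValuation 𝔭 ν) {w₁ w₂ w₃ w₄ x : K}
    (h₁ : w₁ ≠ 0) (h₂ : w₂ ≠ 0) (h₃ : w₃ ≠ 0) (h₄ : w₄ ≠ 0)
    (h : w₁ ^ 2 * w₂ ^ 2 * x = -(w₃ * w₄)) :
    ν x = ν w₃ + ν w₄ - 2 * ν w₁ - 2 * ν w₂ := by
  have hx : x ≠ 0 := by rintro rfl; simp [h₃, h₄] at h
  have := congrArg ν h
  rw [hν.map_neg, hν.map_mul h₃ h₄, hν.map_mul (by positivity) hx,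
    hν.map_mul (by positivity) (by positivity), sq, sq, hν.map_mul h₁ h₁, hν.map_mul h₂ h₂] at this
  omega

end IsNormalizedValuation

end NormalizedValuation

open Classical UniqueFactorizationMonoid WeierstrassCurve.Affine.Point in
theorem neron_local_height_linear_combination_general
    (K : Type*) [Field K] [NumberField K]
    [DecidableEq (Ideal (NumberField.RingOfIntegers K))]
    (𝔭 : Ideal (NumberField.RingOfIntegers K))
    (ν : K → ℤ)
    (hν : ∀ a b : NumberField.RingOfIntegers K, a ≠ 0 → b ≠ 0 →
      ν (algebraMap (NumberField.RingOfIntegers K) K a /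
          algebraMap (NumberField.RingOfIntegers K) K b) =
        (Multiset.count 𝔭 (normalizedFactors (Ideal.span {a})) : ℤ) -
          (Multiset.count 𝔭 (normalizedFactors (Ideal.span {b})) : ℤ))
    (E : WeierstrassCurve.Affine K)
    (P Q : E.Point)
    (hindep : ∀ a b : ℤ, (a, b) ≠ (0, 0) → a • P + b • Q ≠ 0)
    (lam : E.Point → ℝ)
    (hlam : ∀ R S : E.Point, R ≠ 0 → S ≠ 0 → R + S ≠ 0 → R - S ≠ 0 →
      lam (R + S) + lam (R - S) =
        2 * lam R + 2 * lam S + (ν (xCoord R - xCoord S) : ℝ))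
    (W : ℤ × ℤ → K)
    (hW10 : W (1, 0) = 1) (hW01 : W (0, 1) = 1) (hW11 : W (1, 1) = 1)
    (hWne : ∀ v : ℤ × ℤ, v ≠ 0 → W v ≠ 0)
    (hcompat : ∀ u v : ℤ × ℤ, u ≠ 0 → v ≠ 0 → u + v ≠ 0 → u - v ≠ 0 →
      W v ^ 2 * W u ^ 2 *
          (xCoord (v.1 • P + v.2 • Q) - xCoord (u.1 • P + u.2 • Q)) =
        -(W (v + u) * W (v - u))) :
    ∀ a b : ℤ, (a, b) ≠ (0, 0) →
      lam (a • P + b • Q) =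
        (a : ℝ) ^ 2 * lam P + (b : ℝ) ^ 2 * lam Q +
          (a : ℝ) * (b : ℝ) * (lam (P + Q) - lam P - lam Q) +
          (ν (W (a, b)) : ℝ) := by
  intro a b hab
  have hν : IsNormalizedValuation 𝔭 ν := hν
  let φ : ℤ × ℤ →+ E.Point := (zmultiplesHom E.Point P).coprod (zmultiplesHom E.Point Q)
  have hheight : ParallelogramLawAwayFromZero (fun v => lam (φ v) - ν (W v)) := by
    refine .of_quasiParallelogramLaw (fun v hv => hindep v.1 v.2 hv)
      (c := fun R S => (ν (xCoord R - xCoord S) : ℝ))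
      (fun R S hR hS hadd hsub => by simpa using hlam R S hR hS hadd hsub)
      (fun u v hu hv hadd hsub => ?_)
    have := hν.eq_of_sq_mul_sq_mul_eq_neg_mul (hWne u hu) (hWne v hv) (hWne _ hadd)
      (hWne _ hsub) (hcompat v u hv hu (by rwa [add_comm]) (by rwa [← neg_sub, neg_ne_zero]))
    simp only [nsmul_eq_mul]
    exact_mod_cast this
  have hdefect := (hheight.sub (.of_quadraticForm (lam P) (lam Q)
    (lam (P + Q) - lam P - lam Q))).eq_zero_of_prod_int ?_ ?_ ?_ hab
  · simp only [AddMonoidHom.coprod_apply, zmultiplesHom_apply, Pi.sub_apply, φ] at hdefect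
    linarith
  all_goals simp [φ, hW10, hW01, hW11, hν.map_one]

open Classical UniqueFactorizationMonoid WeierstrassCurve.Affine.Point in
/-- The Néron local height formula for the `ℤ`-linear combination `a • P + b • Q`:
if `λ` satisfies the quasi-parallelogram law with respect to the normalized discrete
valuation `ν` associated to a nonzero prime `𝔭`, and `W : ℤ² → K` is an elliptic net
normalized by `W (1,0) = W (0,1) = W (1,1) = 1`, nonvanishing away from `(0,0)`, and
compatible with differences of `x`-coordinates of linear combinations of `P` and `Q`,
then `λ (a•P + b•Q) = a²·λ P + b²·λ Q + a·b·(λ (P+Q) - λ P - λ Q) + ν (W (a, b))`. -/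
theorem neron_local_height_linear_combination
    (K : Type*) [Field K] [NumberField K]
    [DecidableEq (Ideal (NumberField.RingOfIntegers K))]
    (𝔭 : Ideal (NumberField.RingOfIntegers K)) (hp : 𝔭.IsPrime) (hp0 : 𝔭 ≠ ⊥)
    (ν : K → ℤ)
    (hν : ∀ a b : NumberField.RingOfIntegers K, a ≠ 0 → b ≠ 0 →
      ν (algebraMap (NumberField.RingOfIntegers K) K a /
          algebraMap (NumberField.RingOfIntegers K) K b) =
        (Multiset.count 𝔭 (normalizedFactors (Ideal.span {a})) : ℤ) -
          (Multiset.count 𝔭 (normalizedFactors (Ideal.span {b})) : ℤ))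
    (E : WeierstrassCurve.Affine K) [E.IsElliptic]
    (P Q : E.Point)
    (hindep : ∀ a b : ℤ, (a, b) ≠ (0, 0) → a • P + b • Q ≠ 0)
    (lam : E.Point → ℝ)
    (hlam : ∀ R S : E.Point, R ≠ 0 → S ≠ 0 → R + S ≠ 0 → R - S ≠ 0 →
      lam (R + S) + lam (R - S) =
        2 * lam R + 2 * lam S + (ν (xCoord R - xCoord S) : ℝ))
    (W : ℤ × ℤ → K) (hW : IsEllipticNet' W)
    (hW10 : W (1, 0) = 1) (hW01 : W (0, 1) = 1) (hW11 : W (1, 1) = 1)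
    (hWne : ∀ v : ℤ × ℤ, v ≠ 0 → W v ≠ 0)
    (hcompat : ∀ u v : ℤ × ℤ, u ≠ 0 → v ≠ 0 → u + v ≠ 0 → u - v ≠ 0 →
      W v ^ 2 * W u ^ 2 *
          (xCoord (v.1 • P + v.2 • Q) - xCoord (u.1 • P + u.2 • Q)) =
        -(W (v + u) * W (v - u))) :
    ∀ a b : ℤ, (a, b) ≠ (0, 0) →
      lam (a • P + b • Q) =
        (a : ℝ) ^ 2 * lam P + (b : ℝ) ^ 2 * lam Q +
          (a : ℝ) * (b : ℝ) * (lam (P + Q) - lam P - lam Q) +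
          (ν (W (a, b)) : ℝ) :=
  neron_local_height_linear_combination_general K 𝔭 ν hν E P Q hindep lam hlam W hW10 hW01 hW11 hWne
    hcompat
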